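/- arXiv:1509.06499 — 2 statements merged into one kernel-verified Lean document; each statement's English description precedes it below -/
import Mathlib

section
/- For every ε > 0 and every 0 < c₀ ≤ C there exists δ > 0 with the following property. For b₁, b₂ ∈ (0, δ) and c ∈ [c₀, C], define ℓ(c) = log( x(c) + √(x(c)² − 1) ), where x(c) = (cosh(c/2) + cosh(b₁/2)·cosh(b₂/2)) / (sinh(b₁/2)·sinh(b₂/2)). Then for all c, c' ∈ [c₀, C], ℓ(c') / ℓ(c) ≤ (1 + ε) · max{ c'/c , 1 }. (This is the key estimate showing that the ratio of lengths of an orthogeodesic arc on two hyperbolic structures is controlled, up to a factor 1 + o(1), by the ratio of the lengths of the associated interior closed geodesic, as the boundary lengths tend to 0.) -/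
open Real

/-!
The orthogeodesic has length `arcosh x`, where `x = (cosh (c/2) + cosh (b₁/2) cosh (b₂/2)) / s`
with `s = sinh (b₁/2) sinh (b₂/2)`. As `b₁, b₂ → 0` the numerator stays between `2` and a bound
depending only on the range of `c`, while `s → 0`; since `log x ≤ arcosh x ≤ log 2 + log x`,
every such length is `log s⁻¹ + O(1)`. Once `log s⁻¹` exceeds `1/ε` times that `O(1)`, any two
of them are within a factor `1 + ε` of each other, and `max (c'/c) 1 ≥ 1`.
-/

namespace Real

theorem log_le_arcosh {x : ℝ} (hx : 0 < x) : log x ≤ arcosh x :=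
  log_le_log hx (le_add_of_nonneg_right (sqrt_nonneg _))

theorem arcosh_le_log_two_mul {x : ℝ} (hx : 0 < x) : arcosh x ≤ log (2 * x) := by
  have hsqrt : √(x ^ 2 - 1) ≤ x := (sqrt_le_left hx.le).2 (by linarith)
  exact log_le_log (by positivity) (by linarith)

theorem cosh_le_one_add_sinh {t : ℝ} (ht : 0 ≤ t) : cosh t ≤ 1 + sinh t := by
  have h := cosh_sub_sinh t
  have : exp (-t) ≤ 1 := exp_le_one_iff.2 (neg_nonpos.2 ht)
  linarith

theorem cosh_le_max_cosh_of_mem_Icc {a b c : ℝ} (hc : c ∈ Set.Icc a b) :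
    cosh c ≤ max (cosh a) (cosh b) := by
  rcases le_max_iff.1 (abs_le_max_abs_abs hc.1 hc.2) with h | h
  · exact le_max_of_le_left (cosh_le_cosh.2 h)
  · exact le_max_of_le_right (cosh_le_cosh.2 h)

theorem sinh_half_lt_of_lt_two_mul_arsinh {b η : ℝ} (hb : b < 2 * arsinh η) : sinh (b / 2) < η := by
  rw [← arsinh_lt_arsinh, arsinh_sinh]
  linarith

theorem le_mul_log_inv_mul_of_lt_exp {a ε u v : ℝ} (hε : 0 < ε) (hu : 0 < u) (hv : 0 < v)
    (hu' : u < exp (-(a / (2 * ε)))) (hv' : v < exp (-(a / (2 * ε)))) :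
    a ≤ ε * log (u * v)⁻¹ := by
  have hlogu := log_lt_log hu hu'
  have hlogv := log_lt_log hv hv'
  rw [log_exp] at hlogu hlogv
  rw [log_inv, log_mul hu.ne' hv.ne', ← div_le_iff₀' hε]
  linarith [(by ring : a / ε = 2 * (a / (2 * ε)))]

end Real

/-- `cosh` of the length of the orthogeodesic joining the boundary components of lengths `b₁`
and `b₂` in the pair of pants with boundary lengths `b₁, b₂, c`. -/
noncomputable def orthoCosh (b₁ b₂ c : ℝ) : ℝ :=
  (cosh (c / 2) + cosh (b₁ / 2) * cosh (b₂ / 2)) / (sinh (b₁ / 2) * sinh (b₂ / 2))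

section OrthoCosh

variable {b₁ b₂ : ℝ} (c : ℝ)

theorem sinh_half_mul_sinh_half_pos (hb₁ : 0 < b₁) (hb₂ : 0 < b₂) :
    0 < sinh (b₁ / 2) * sinh (b₂ / 2) :=
  mul_pos (sinh_pos_iff.2 (half_pos hb₁)) (sinh_pos_iff.2 (half_pos hb₂))

theorem inv_le_orthoCosh (hb₁ : 0 < b₁) (hb₂ : 0 < b₂) :
    (sinh (b₁ / 2) * sinh (b₂ / 2))⁻¹ ≤ orthoCosh b₁ b₂ c := by
  have hK : 1 ≤ cosh (b₁ / 2) * cosh (b₂ / 2) :=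
    one_le_mul_of_one_le_of_one_le (one_le_cosh _) (one_le_cosh _)
  have hs := sinh_half_mul_sinh_half_pos hb₁ hb₂
  rw [orthoCosh, inv_eq_one_div]
  gcongr
  linarith [one_le_cosh (c / 2)]

theorem one_lt_orthoCosh (hb₁ : 0 < b₁) (hb₂ : 0 < b₂) (h₁ : sinh (b₁ / 2) ≤ 1)
    (h₂ : sinh (b₂ / 2) ≤ 1) : 1 < orthoCosh b₁ b₂ c := by
  have hK : 1 ≤ cosh (b₁ / 2) * cosh (b₂ / 2) :=
    one_le_mul_of_one_le_of_one_le (one_le_cosh _) (one_le_cosh _)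
  have hs : sinh (b₁ / 2) * sinh (b₂ / 2) ≤ 1 :=
    mul_le_one₀ h₁ (sinh_pos_iff.2 (half_pos hb₂)).le h₂
  rw [orthoCosh, one_lt_div (sinh_half_mul_sinh_half_pos hb₁ hb₂)]
  linarith [one_le_cosh (c / 2)]

theorem orthoCosh_le (hb₁ : 0 ≤ b₁) (hb₂ : 0 ≤ b₂) (h₁ : sinh (b₁ / 2) ≤ 1)
    (h₂ : sinh (b₂ / 2) ≤ 1) :
    orthoCosh b₁ b₂ c ≤ (cosh (c / 2) + 4) / (sinh (b₁ / 2) * sinh (b₂ / 2)) := by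
  have hcosh₁ : cosh (b₁ / 2) ≤ 2 := by
    linarith [cosh_le_one_add_sinh (by positivity : 0 ≤ b₁ / 2)]
  have hcosh₂ : cosh (b₂ / 2) ≤ 2 := by
    linarith [cosh_le_one_add_sinh (by positivity : 0 ≤ b₂ / 2)]
  have hs : 0 ≤ sinh (b₁ / 2) * sinh (b₂ / 2) :=
    mul_nonneg (sinh_nonneg_iff.2 (by positivity)) (sinh_nonneg_iff.2 (by positivity))
  rw [orthoCosh]
  gcongr
  nlinarith [(cosh_pos (b₁ / 2)).le]

end OrthoCosh

theorem arcosh_orthoCosh_le_one_add_mul {ε M b₁ b₂ c c' : ℝ} (hε : 0 ≤ ε) (hb₁ : 0 < b₁)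
    (hb₂ : 0 < b₂) (h₁ : sinh (b₁ / 2) ≤ 1) (h₂ : sinh (b₂ / 2) ≤ 1) (hc' : cosh (c' / 2) ≤ M)
    (hsmall : log (2 * (M + 4)) ≤ ε * log (sinh (b₁ / 2) * sinh (b₂ / 2))⁻¹) :
    arcosh (orthoCosh b₁ b₂ c') ≤ (1 + ε) * arcosh (orthoCosh b₁ b₂ c) := by
  set s := sinh (b₁ / 2) * sinh (b₂ / 2)
  have hs : 0 < s := sinh_half_mul_sinh_half_pos hb₁ hb₂
  have hM : 0 < M + 4 := by linarith [one_le_cosh (c' / 2)]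
  have hlower : log s⁻¹ ≤ arcosh (orthoCosh b₁ b₂ c) :=
    (log_le_log (inv_pos.2 hs) (inv_le_orthoCosh c hb₁ hb₂)).trans
      (log_le_arcosh ((inv_pos.2 hs).trans_le (inv_le_orthoCosh c hb₁ hb₂)))
  have hupper : arcosh (orthoCosh b₁ b₂ c') ≤ log (2 * (M + 4)) + log s⁻¹ :=
    calc arcosh (orthoCosh b₁ b₂ c') ≤ log (2 * orthoCosh b₁ b₂ c') :=
          arcosh_le_log_two_mul (zero_lt_one.trans (one_lt_orthoCosh c' hb₁ hb₂ h₁ h₂))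
      _ ≤ log (2 * ((M + 4) * s⁻¹)) := by
          gcongr
          · linarith [one_lt_orthoCosh c' hb₁ hb₂ h₁ h₂]
          · rw [← div_eq_mul_inv]
            exact (orthoCosh_le c' hb₁.le hb₂.le h₁ h₂).trans (by gcongr)
      _ = log (2 * (M + 4)) + log s⁻¹ := by
          rw [← mul_assoc, log_mul (by positivity) (inv_pos.2 hs).ne']
  nlinarith [mul_le_mul_of_nonneg_left hlower (by linarith : (0:ℝ) ≤ 1 + ε)]

theorem arc_ratio_estimate_general (ε : ℝ) (hε : 0 < ε) (c₀ C : ℝ) :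
    ∃ δ > 0, ∀ b₁ b₂ : ℝ, b₁ ∈ Set.Ioo 0 δ → b₂ ∈ Set.Ioo 0 δ →
      ∀ c ∈ Set.Icc c₀ C, ∀ c' ∈ Set.Icc c₀ C,
        (fun ℓ : ℝ → ℝ => ℓ c' / ℓ c ≤ (1 + ε) * max (c' / c) 1)
          (fun c : ℝ =>
            (fun x : ℝ => Real.log (x + Real.sqrt (x ^ 2 - 1)))
              ((Real.cosh (c / 2) + Real.cosh (b₁ / 2) * Real.cosh (b₂ / 2)) /
                (Real.sinh (b₁ / 2) * Real.sinh (b₂ / 2)))) := by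
  set M := max (cosh (c₀ / 2)) (cosh (C / 2))
  have ha : 0 ≤ log (2 * (M + 4)) :=
    log_nonneg (by linarith [(one_le_cosh _).trans (le_max_left _ _ : _ ≤ M)])
  set η := exp (-(log (2 * (M + 4)) / (2 * ε)))
  have hη : η ≤ 1 := exp_le_one_iff.2 (neg_nonpos.2 (by positivity))
  refine ⟨2 * arsinh η, mul_pos two_pos (arsinh_pos_iff.2 (exp_pos _)), ?_⟩
  intro b₁ b₂ hb₁ hb₂ c _ c' hc'
  have hs₁ := sinh_half_lt_of_lt_two_mul_arsinh hb₁.2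
  have hs₂ := sinh_half_lt_of_lt_two_mul_arsinh hb₂.2
  have h₁ := hs₁.le.trans hη
  have h₂ := hs₂.le.trans hη
  have key := arcosh_orthoCosh_le_one_add_mul (c := c) (c' := c') hε.le hb₁.1 hb₂.1 h₁ h₂
    (cosh_le_max_cosh_of_mem_Icc ⟨by linarith [hc'.1], by linarith [hc'.2]⟩)
    (le_mul_log_inv_mul_of_lt_exp hε (sinh_pos_iff.2 (half_pos hb₁.1))
      (sinh_pos_iff.2 (half_pos hb₂.1)) hs₁ hs₂)
  have hpos := arcosh_pos (one_lt_orthoCosh c hb₁.1 hb₂.1 h₁ h₂)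
  show arcosh (orthoCosh b₁ b₂ c') / arcosh (orthoCosh b₁ b₂ c) ≤ (1 + ε) * max (c' / c) 1
  rw [div_le_iff₀ hpos]
  exact key.trans (mul_le_mul_of_nonneg_right
    (le_mul_of_one_le_right (by linarith) (le_max_right _ _)) hpos.le)

/-- Key estimate: the ratio of orthogeodesic arc lengths on two hyperbolic pairs of
pants (with third boundary lengths `c`, `c'` in a compact interval of `(0, ∞)`) is
controlled, up to a `1 + ε` factor, by `max (c'/c) 1`, once the two common boundary
lengths `b₁, b₂` are small enough. -/
theorem arc_ratio_estimate (ε : ℝ) (hε : 0 < ε) (c₀ C : ℝ)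
    (hc₀ : 0 < c₀) (hc₀C : c₀ ≤ C) :
    ∃ δ > 0, ∀ b₁ b₂ : ℝ, b₁ ∈ Set.Ioo 0 δ → b₂ ∈ Set.Ioo 0 δ →
      ∀ c ∈ Set.Icc c₀ C, ∀ c' ∈ Set.Icc c₀ C,
        (fun ℓ : ℝ → ℝ => ℓ c' / ℓ c ≤ (1 + ε) * max (c' / c) 1)
          (fun c : ℝ =>
            (fun x : ℝ => Real.log (x + Real.sqrt (x ^ 2 - 1)))
              ((Real.cosh (c / 2) + Real.cosh (b₁ / 2) * Real.cosh (b₂ / 2)) /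
                (Real.sinh (b₁ / 2) * Real.sinh (b₂ / 2)))) :=
  arc_ratio_estimate_general ε hε c₀ C
end

section
/- For all real numbers a, b ≥ 0 and all ℓ ≥ 1, one has (1/32)·e^{a+b+ℓ} ≤ cosh(a)·cosh(b)·cosh(ℓ) − sinh(a)·sinh(b) ≤ e^{a+b+ℓ}. -/
/-!
Since `cosh a cosh b - sinh a sinh b = cosh (a - b) ≥ 0`, the quantity
`t = cosh a cosh b cosh ℓ - sinh a sinh b` is at least `cosh a cosh b (cosh ℓ - 1)`; with
`cosh x ≥ eˣ / 2` and `cosh ℓ - 1 ≥ e^ℓ / 8` (which needs `e^ℓ ≥ 8 / 3`, true as `ℓ ≥ 1`) this gives the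
lower bound. For `a, b ≥ 0` the subtracted term is nonnegative, so `t ≤ cosh a cosh b cosh ℓ ≤ e^(a+b+ℓ)`.
-/

open Real

namespace Real

lemma exp_div_two_le_cosh (x : ℝ) : exp x / 2 ≤ cosh x := by
  rw [cosh_eq]
  linarith [exp_pos (-x)]

lemma cosh_le_exp_of_nonneg {x : ℝ} (hx : 0 ≤ x) : cosh x ≤ exp x := by
  rw [← exp_sub_sinh]
  linarith [sinh_nonneg_iff.mpr hx]

lemma exp_div_eight_le_cosh_sub_one {x : ℝ} (hx : 1 ≤ x) : exp x / 8 ≤ cosh x - 1 := by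
  have h_exp : 8 / 3 ≤ exp x :=
    calc (8 / 3 : ℝ) ≤ exp 1 := by linarith [exp_one_gt_d9]
      _ ≤ exp x := exp_le_exp.mpr hx
  linarith [exp_div_two_le_cosh x]

lemma cosh_mul_cosh_mul_cosh_sub_sinh_mul_sinh (a b ℓ : ℝ) :
    cosh a * cosh b * cosh ℓ - sinh a * sinh b = cosh a * cosh b * (cosh ℓ - 1) + cosh (a - b) := by
  rw [cosh_sub]
  ring

lemma exp_div_thirtytwo_le_cosh_mul_cosh_mul_cosh_sub_sinh_mul_sinh {a b ℓ : ℝ} (hℓ : 1 ≤ ℓ) :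
    exp (a + b + ℓ) / 32 ≤ cosh a * cosh b * cosh ℓ - sinh a * sinh b := by
  rw [cosh_mul_cosh_mul_cosh_sub_sinh_mul_sinh, exp_add, exp_add]
  have h_main : exp a / 2 * (exp b / 2) * (exp ℓ / 8) ≤ cosh a * cosh b * (cosh ℓ - 1) := by
    gcongr
    · exact exp_div_two_le_cosh a
    · exact exp_div_two_le_cosh b
    · exact exp_div_eight_le_cosh_sub_one hℓ
  linarith [cosh_pos (a - b)]

lemma cosh_mul_cosh_mul_cosh_sub_sinh_mul_sinh_le_exp {a b ℓ : ℝ} (ha : 0 ≤ a) (hb : 0 ≤ b)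
    (hℓ : 0 ≤ ℓ) : cosh a * cosh b * cosh ℓ - sinh a * sinh b ≤ exp (a + b + ℓ) := by
  have h_prod : cosh a * cosh b * cosh ℓ ≤ exp a * exp b * exp ℓ := by
    gcongr
    · exact cosh_le_exp_of_nonneg ha
    · exact cosh_le_exp_of_nonneg hb
    · exact cosh_le_exp_of_nonneg hℓ
  rw [exp_add, exp_add]
  linarith [mul_nonneg (sinh_nonneg_iff.mpr ha) (sinh_nonneg_iff.mpr hb)]

end Real

/-- Two-sided exponential estimate for
`t = cosh a · cosh b · cosh ℓ − sinh a · sinh b`, for `a, b ≥ 0`, `ℓ ≥ 1`. -/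
theorem quadrilateral_cosh_bounds (a b ℓ : ℝ) (ha : 0 ≤ a) (hb : 0 ≤ b) (hℓ : 1 ≤ ℓ) :
    (1 / 32) * Real.exp (a + b + ℓ) ≤
        Real.cosh a * Real.cosh b * Real.cosh ℓ - Real.sinh a * Real.sinh b ∧
      Real.cosh a * Real.cosh b * Real.cosh ℓ - Real.sinh a * Real.sinh b ≤
        Real.exp (a + b + ℓ) := by
  refine ⟨?_, cosh_mul_cosh_mul_cosh_sub_sinh_mul_sinh_le_exp ha hb (by linarith)⟩
  rw [one_div_mul_eq_div]
  exact exp_div_thirtytwo_le_cosh_mul_cosh_mul_cosh_sub_sinh_mul_sinh hℓ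
end
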